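/- arXiv:2110.08500 — 5 statements merged into one kernel-verified Lean document; each statement's English description precedes it below -/
import Mathlib

section
/- Let P_{θ*} be a zero-field Ising model whose graph G is a tree with node degrees d_r ≥ 3 for the fixed node r, and maximum degree d. Let θ̃*_{∖r} be the rescaled parameter vector, and for x ∈ {−1,+1}^p and s ∈ V∖{r} define Z_s(x) = x_s·(x_r − Σ_{t∈V∖r} θ̃*_{rt} x_t). Then for every x ∈ {−1,+1}^p and every s, |Z_s(x)| ≤ max{9/4, (4 + d_r)/4} < d_r, and in particular |Z_s(x)| ≤ d. -/
open Finset Matrix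

noncomputable section

/-- A spin configuration on `p` sites. -/
abbrev Config (p : ℕ) := Fin p → Bool

/-- The ±1 spin value of a configuration at a site. -/
def spin {p : ℕ} (x : Config p) (r : Fin p) : ℝ := if x r then 1 else -1

/-- The (negated) Ising energy `Σ_{r≠t} θ_{rt} x_r x_t`. -/
def energy {p : ℕ} (θ : Matrix (Fin p) (Fin p) ℝ) (x : Config p) : ℝ :=
  ∑ r : Fin p, ∑ t : Fin p, if r ≠ t then θ r t * spin x r * spin x t else 0

/-- The partition function of the zero-field Ising model. -/
def partZ {p : ℕ} (θ : Matrix (Fin p) (Fin p) ℝ) : ℝ :=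
  ∑ x : Config p, Real.exp (energy θ x)

/-- The Ising probability of a configuration. -/
def isingP {p : ℕ} (θ : Matrix (Fin p) (Fin p) ℝ) (x : Config p) : ℝ :=
  Real.exp (energy θ x) / partZ θ

/-- Expectation of an observable under a (finitely supported) distribution on configurations. -/
def pExp {p : ℕ} (μ : Config p → ℝ) (f : Config p → ℝ) : ℝ :=
  ∑ x : Config p, μ x * f x

/-- Expectation under the Ising model. -/
def isingE {p : ℕ} (θ : Matrix (Fin p) (Fin p) ℝ) (f : Config p → ℝ) : ℝ :=
  pExp (isingP θ) f

/-- The graph associated with the couplings: an edge whenever the coupling is nonzero. -/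
def isingGraph {p : ℕ} (θ : Matrix (Fin p) (Fin p) ℝ) : SimpleGraph (Fin p) where
  Adj r t := r ≠ t ∧ θ r t ≠ 0 ∧ θ t r ≠ 0
  symm := ⟨fun r t ⟨h1, h2, h3⟩ => ⟨h1.symm, h3, h2⟩⟩
  loopless := ⟨fun r h => h.1 rfl⟩

/-- The neighborhood `N(r)` of a node, as a finite set. -/
def nbr {p : ℕ} (θ : Matrix (Fin p) (Fin p) ℝ) (r : Fin p) : Finset (Fin p) :=
  univ.filter fun t => t ≠ r ∧ θ r t ≠ 0

/-- The complement `S^c` of the neighborhood inside `V ∖ {r}`. -/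
def nbrC {p : ℕ} (θ : Matrix (Fin p) (Fin p) ℝ) (r : Fin p) : Finset (Fin p) :=
  (univ.erase r) \ nbr θ r

/-- The rescaled parameter vector `θ̃*_{r·}`. -/
def rescaled {p : ℕ} (θ : Matrix (Fin p) (Fin p) ℝ) (r t : Fin p) : ℝ :=
  if t ∈ nbr θ r then
    (1 / (1 - ((nbr θ r).card : ℝ) + ∑ u ∈ nbr θ r, 1 / (1 - Real.tanh (θ r u) ^ 2))) *
      (Real.tanh (θ r t) / (1 - Real.tanh (θ r t) ^ 2))
  else 0

/-- Second-moment (covariance) matrix of the spins under a distribution `μ`. -/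
def pCov {p : ℕ} (μ : Config p → ℝ) : Matrix (Fin p) (Fin p) ℝ :=
  Matrix.of fun s t => pExp μ fun x => spin x s * spin x t

/-- Population covariance matrix of the Ising model. -/
def covM {p : ℕ} (θ : Matrix (Fin p) (Fin p) ℝ) : Matrix (Fin p) (Fin p) ℝ :=
  pCov (isingP θ)

/-- Submatrix of a `p × p` matrix indexed by two finite index sets. -/
def subm {p : ℕ} (Q : Matrix (Fin p) (Fin p) ℝ) (A B : Finset (Fin p)) :
    Matrix A B ℝ :=
  Matrix.of fun a b => Q a.1 b.1

/-- The `ℓ∞` matrix norm `⦀A⦀_∞ = max_j Σ_k |A_{jk}|`. -/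
def matInfNorm {m n : Type*} [Fintype m] [Fintype n] (A : Matrix m n ℝ) : ℝ :=
  ⨆ j : m, ∑ k : n, |A j k|

/-- The sample covariance matrix `Qⁿ`. -/
def sampleCov {p n : ℕ} (xs : Fin n → Config p) : Matrix (Fin p) (Fin p) ℝ :=
  Matrix.of fun s t => (1 / (n : ℝ)) * ∑ i : Fin n, spin (xs i) s * spin (xs i) t

/-- The square loss `ℓ(θ_{∖r})` for neighborhood regression at node `r`. -/
def sqLoss {p n : ℕ} (xs : Fin n → Config p) (r : Fin p) (v : Fin p → ℝ) : ℝ :=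
  (1 / (2 * (n : ℝ))) *
    ∑ i : Fin n, (spin (xs i) r - ∑ t ∈ univ.erase r, v t * spin (xs i) t) ^ 2

/-- The Lasso objective: square loss plus `ℓ1` penalty. -/
def lassoObj {p n : ℕ} (xs : Fin n → Config p) (r : Fin p) (lam : ℝ) (v : Fin p → ℝ) : ℝ :=
  sqLoss xs r v + lam * ∑ t ∈ univ.erase r, |v t|

/-- `v` is a solution of the neighborhood Lasso problem at node `r`. -/
def IsLassoSol {p n : ℕ} (xs : Fin n → Config p) (r : Fin p) (lam : ℝ) (v : Fin p → ℝ) :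
    Prop :=
  v r = 0 ∧ ∀ w : Fin p → ℝ, w r = 0 → lassoObj xs r lam v ≤ lassoObj xs r lam w

/-- `v` is a solution of Lasso restricted to vectors supported on `S`. -/
def IsRestrictedLassoSol {p n : ℕ} (xs : Fin n → Config p) (r : Fin p) (S : Finset (Fin p))
    (lam : ℝ) (v : Fin p → ℝ) : Prop :=
  (∀ t, t ∉ S → v t = 0) ∧
    ∀ w : Fin p → ℝ, (∀ t, t ∉ S → w t = 0) → lassoObj xs r lam v ≤ lassoObj xs r lam w

/-- Gradient of the square loss, coordinate `s`. -/
def gradLoss {p n : ℕ} (xs : Fin n → Config p) (r : Fin p) (v : Fin p → ℝ) (s : Fin p) : ℝ :=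
  -((1 / (n : ℝ)) * ∑ i : Fin n,
      spin (xs i) s * (spin (xs i) r - ∑ t ∈ univ.erase r, v t * spin (xs i) t))

/-- `Wⁿ = -∇ℓ(θ̃*_{∖r})`, evaluated at the rescaled parameter vector. -/
def Wn {p n : ℕ} (θ : Matrix (Fin p) (Fin p) ℝ) (xs : Fin n → Config p) (r : Fin p)
    (s : Fin p) : ℝ :=
  -gradLoss xs r (rescaled θ r) s

/-- Probability of a set of i.i.d. samples under a distribution `μ` on configurations. -/
def pSampleP {p n : ℕ} (μ : Config p → ℝ) (A : Set (Fin n → Config p)) : ℝ :=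
  ∑ xs : Fin n → Config p, A.indicator (fun ys => ∏ i : Fin n, μ (ys i)) xs

/-- Probability of a set of i.i.d. samples from the Ising model. -/
def sampleP {p n : ℕ} (θ : Matrix (Fin p) (Fin p) ℝ) (A : Set (Fin n → Config p)) : ℝ :=
  pSampleP (isingP θ) A


/-- deterministic bound on the residual-correlation variables
Z_s(x) = x_s (x_r − Σ_t θ̃*_{rt} x_t) for a tree Ising model with d_r ≥ 3. -/
theorem statement_6 (p : ℕ) (θ : Matrix (Fin p) (Fin p) ℝ)
    (hsymm : θ.IsSymm) (hdiag : ∀ s, θ s s = 0)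
    (htree : (isingGraph θ).IsTree)
    (r : Fin p) (hdr : 3 ≤ (nbr θ r).card)
    (d : ℕ) (hd : d = univ.sup fun s : Fin p => (nbr θ s).card) :
    ∀ (x : Config p) (s : Fin p), s ≠ r →
      (|spin x s * (spin x r - ∑ t ∈ univ.erase r, rescaled θ r t * spin x t)| ≤
        max (9 / 4 : ℝ) ((4 + ((nbr θ r).card : ℝ)) / 4)) ∧
      max (9 / 4 : ℝ) ((4 + ((nbr θ r).card : ℝ)) / 4) < ((nbr θ r).card : ℝ) ∧
      |spin x s * (spin x r - ∑ t ∈ univ.erase r, rescaled θ r t * spin x t)| ≤ (d : ℝ) := by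
  intro x s hs
  have hspin : ∀ (y : Config p) (t : Fin p), |spin y t| = 1 := by
    intro y t; unfold spin; split <;> norm_num
  have htanh : ∀ y : ℝ, 0 < 1 - Real.tanh y ^ 2 := by
    intro y
    have h1 : Real.tanh y ^ 2 = Real.sinh y ^ 2 / Real.cosh y ^ 2 := by
      rw [Real.tanh_eq_sinh_div_cosh, div_pow]
    have h2 : Real.sinh y ^ 2 / Real.cosh y ^ 2 < 1 := by
      rw [div_lt_one (by positivity : (0:ℝ) < Real.cosh y ^ 2)]
      nlinarith [Real.cosh_sq y]
    linarith [h1 ▸ h2]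
  set N : ℝ := ((nbr θ r).card : ℝ) with hN
  have hN3 : (3:ℝ) ≤ N := by rw [hN]; exact_mod_cast hdr
  set a : Fin p → ℝ := fun u => 1 / (1 - Real.tanh (θ r u) ^ 2) with ha
  have ha1 : ∀ u, 1 ≤ a u := by
    intro u
    rw [ha]
    rw [le_div_iff₀ (htanh _)]
    nlinarith [sq_nonneg (Real.tanh (θ r u))]
  set D : ℝ := 1 - N + ∑ u ∈ nbr θ r, a u with hD
  have hD1 : 1 ≤ D := by
    have h1 : N ≤ ∑ u ∈ nbr θ r, a u := by
      calc N = ∑ _u ∈ nbr θ r, (1:ℝ) := by simp [hN]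
        _ ≤ ∑ u ∈ nbr θ r, a u := Finset.sum_le_sum fun u _ => ha1 u
    linarith [hD]
  have hDpos : (0:ℝ) < D := by linarith
  -- per-edge bound
  have hedge : ∀ t, |Real.tanh (θ r t) / (1 - Real.tanh (θ r t) ^ 2)| ≤ (5 * a t - 4) / 4 := by
    intro t
    set τ := Real.tanh (θ r t) with hτ
    have hc : 0 < 1 - τ ^ 2 := htanh _
    have habs : |τ / (1 - τ ^ 2)| = |τ| / (1 - τ ^ 2) := by
      rw [abs_div, abs_of_pos hc]
    rw [habs, div_le_iff₀ hc]
    have hat : a t = 1 / (1 - τ ^ 2) := rfl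
    rw [hat]
    have h4 : 4 * |τ| ≤ 1 + 4 * τ ^ 2 := by
      nlinarith [sq_nonneg (2 * |τ| - 1), sq_abs τ]
    have h5 : (5 * (1 / (1 - τ ^ 2)) - 4) / 4 * (1 - τ ^ 2)
        = (5 - 4 * (1 - τ ^ 2)) / 4 := by
      field_simp
    rw [h5]
    linarith
  -- sum of rescaled magnitudes
  have hresc : ∀ t, |rescaled θ r t| ≤ if t ∈ nbr θ r then (1 / D) * ((5 * a t - 4) / 4) else 0 := by
    intro t
    unfold rescaled
    by_cases ht : t ∈ nbr θ r
    · simp only [ht, if_true]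
      rw [abs_mul]
      have h1 : |1 / (1 - N + ∑ u ∈ nbr θ r, a u)| = 1 / D := by
        rw [← hD, abs_of_pos (by positivity)]
      rw [h1]
      have := hedge t
      have h2 : (0:ℝ) ≤ 1 / D := by positivity
      exact mul_le_mul_of_nonneg_left (hedge t) h2
    · simp [ht]
  have hsum : ∑ t ∈ univ.erase r, |rescaled θ r t| ≤ (1 / D) * ((5 * D - 5 + N) / 4) := by
    have hsub : nbr θ r ⊆ univ.erase r := by
      intro t ht
      simp only [nbr, Finset.mem_filter] at ht
      exact Finset.mem_erase.mpr ⟨ht.2.1, Finset.mem_univ t⟩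
    have h0 : ∀ t ∈ univ.erase r, t ∉ nbr θ r → |rescaled θ r t| = 0 := by
      intro t _ ht
      unfold rescaled
      simp [ht]
    rw [← Finset.sum_subset hsub h0]
    calc ∑ t ∈ nbr θ r, |rescaled θ r t|
        ≤ ∑ t ∈ nbr θ r, (1 / D) * ((5 * a t - 4) / 4) := by
          refine Finset.sum_le_sum fun t ht => ?_
          have := hresc t
          simpa [ht] using this
      _ = (1 / D) * ((5 * D - 5 + N) / 4) := by
          rw [← Finset.mul_sum]
          congr 1
          have hsa : ∑ u ∈ nbr θ r, a u = D - 1 + N := by rw [hD]; ring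
          rw [← Finset.sum_div, Finset.sum_sub_distrib, ← Finset.mul_sum, hsa]
          simp [← hN]
          ring
  -- key bound on the sum
  have hM : (1 / D) * ((5 * D - 5 + N) / 4) ≤ max (9 / 4 : ℝ) ((4 + N) / 4) - 1 := by
    rcases le_or_gt N 5 with h5 | h5
    · have h1 : (1 / D) * ((5 * D - 5 + N) / 4) ≤ 5 / 4 := by
        rw [div_mul_eq_mul_div, one_mul, div_le_div_iff₀ hDpos (by norm_num : (0:ℝ) < 4)]
        nlinarith
      have h2 : (5:ℝ) / 4 ≤ max (9 / 4 : ℝ) ((4 + N) / 4) - 1 := by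
        have := le_max_left (9 / 4 : ℝ) ((4 + N) / 4)
        linarith
      linarith
    · have h1 : (1 / D) * ((5 * D - 5 + N) / 4) ≤ N / 4 := by
        rw [div_mul_eq_mul_div, one_mul, div_le_div_iff₀ hDpos (by norm_num : (0:ℝ) < 4)]
        nlinarith
      have h2 : N / 4 ≤ max (9 / 4 : ℝ) ((4 + N) / 4) - 1 := by
        have := le_max_right (9 / 4 : ℝ) ((4 + N) / 4)
        linarith
      linarith
  -- main absolute value bound
  have hmain : |spin x s * (spin x r - ∑ t ∈ univ.erase r, rescaled θ r t * spin x t)| ≤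
      max (9 / 4 : ℝ) ((4 + N) / 4) := by
    rw [abs_mul, hspin, one_mul]
    have h1 : |∑ t ∈ univ.erase r, rescaled θ r t * spin x t| ≤
        ∑ t ∈ univ.erase r, |rescaled θ r t| := by
      calc |∑ t ∈ univ.erase r, rescaled θ r t * spin x t|
          ≤ ∑ t ∈ univ.erase r, |rescaled θ r t * spin x t| := Finset.abs_sum_le_sum_abs _ _
        _ = ∑ t ∈ univ.erase r, |rescaled θ r t| := by
            refine Finset.sum_congr rfl fun t _ => ?_
            rw [abs_mul, hspin, mul_one]
    have h2 : |spin x r - ∑ t ∈ univ.erase r, rescaled θ r t * spin x t| ≤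
        1 + ∑ t ∈ univ.erase r, |rescaled θ r t| := by
      calc |spin x r - ∑ t ∈ univ.erase r, rescaled θ r t * spin x t|
          ≤ |spin x r| + |∑ t ∈ univ.erase r, rescaled θ r t * spin x t| := abs_sub _ _
        _ ≤ 1 + ∑ t ∈ univ.erase r, |rescaled θ r t| := by rw [hspin]; linarith
    linarith
  have hlt : max (9 / 4 : ℝ) ((4 + N) / 4) < N := by
    apply max_lt <;> linarith
  refine ⟨hmain, hlt, ?_⟩
  have hNd : N ≤ (d : ℝ) := by
    rw [hd, hN]
    exact_mod_cast Finset.le_sup (f := fun s : Fin p => (nbr θ s).card) (Finset.mem_univ r)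
  linarith

end
end

section
/- Fix a node r with neighborhood N(r) of size d_r ≥ 3 and arbitrary nonzero real couplings θ*_{ru}, u ∈ N(r), and let θ̃*_{rt} = [1/(1 − d_r + Σ_{u∈N(r)} 1/(1 − tanh²(θ*_{ru})))] · tanh(θ*_{rt})/(1 − tanh²(θ*_{rt})) for t ∈ N(r) and θ̃*_{rt} = 0 for t ∉ N(r). Then the ℓ1 norm satisfies Σ_{t∈V∖r} |θ̃*_{rt}| ≤ 5/4 if d_r ≤ 5, and Σ_{t∈V∖r} |θ̃*_{rt}| ≤ d_r/4 if d_r > 5. -/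
open Finset Matrix

noncomputable section

lemma tanh_sq_lt_one' (x : ℝ) : Real.tanh x ^ 2 < 1 := by
  have hc := Real.cosh_pos x
  have hs := Real.cosh_sq x
  rw [Real.tanh_eq_sinh_div_cosh, div_pow, div_lt_one (by positivity)]
  nlinarith

lemma key_lemma {ι : Type*} (S : Finset ι) (b : ι → ℝ) (hb : ∀ t ∈ S, 0 ≤ b t)
    (C : ℝ) (hC : 0 ≤ C) (hd : 2 ≤ S.card)
    (hC2 : (S.card : ℝ) ^ 2 ≤ 4 * ((S.card : ℝ) - 1) * C ^ 2) :
    ∑ t ∈ S, Real.sqrt (b t * (1 + b t)) ≤ C * (1 + ∑ t ∈ S, b t) := by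
  set d : ℝ := (S.card : ℝ) with hdd
  set B : ℝ := ∑ t ∈ S, b t with hB
  have hBnn : 0 ≤ B := Finset.sum_nonneg hb
  have hdge : (2:ℝ) ≤ d := by rw [hdd]; exact_mod_cast hd
  have hcs : (∑ t ∈ S, Real.sqrt (b t * (1 + b t))) ^ 2 ≤ B * (d + B) := by
    have h1 : ∀ t ∈ S, Real.sqrt (b t * (1 + b t))
        = Real.sqrt (b t) * Real.sqrt (1 + b t) := fun t ht =>
      Real.sqrt_mul (hb t ht) _
    rw [Finset.sum_congr rfl h1]
    have := Finset.sum_mul_sq_le_sq_mul_sq S (fun t => Real.sqrt (b t))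
      (fun t => Real.sqrt (1 + b t))
    refine this.trans_eq ?_
    have e1 : ∑ t ∈ S, Real.sqrt (b t) ^ 2 = B := by
      rw [hB]; exact Finset.sum_congr rfl fun t ht => Real.sq_sqrt (hb t ht)
    have e2 : ∑ t ∈ S, Real.sqrt (1 + b t) ^ 2 = d + B := by
      have : ∀ t ∈ S, Real.sqrt (1 + b t) ^ 2 = 1 + b t := fun t ht =>
        Real.sq_sqrt (by linarith [hb t ht])
      rw [Finset.sum_congr rfl this, Finset.sum_add_distrib, hB, hdd]
      simp
    rw [e1, e2]
  have hmain : B * (d + B) ≤ C ^ 2 * (1 + B) ^ 2 := by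
    have hsq : 4 * (d - 1) * (B * (d + B)) ≤ d ^ 2 * (1 + B) ^ 2 := by
      nlinarith [sq_nonneg (d - B * (d - 2))]
    nlinarith [sq_nonneg (1 + B)]
  have hsum_nn : 0 ≤ ∑ t ∈ S, Real.sqrt (b t * (1 + b t)) :=
    Finset.sum_nonneg fun t _ => Real.sqrt_nonneg _
  nlinarith [hcs, hmain, mul_nonneg hC (by linarith : (0:ℝ) ≤ 1 + B)]

/-- ℓ1-norm bound for the rescaled parameter vector. -/
theorem statement_7 (p : ℕ) (θ : Matrix (Fin p) (Fin p) ℝ) (r : Fin p)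
    (hdr : 3 ≤ (nbr θ r).card) :
    ((nbr θ r).card ≤ 5 → ∑ t ∈ univ.erase r, |rescaled θ r t| ≤ 5 / 4) ∧
    (5 < (nbr θ r).card →
      ∑ t ∈ univ.erase r, |rescaled θ r t| ≤ ((nbr θ r).card : ℝ) / 4) := by
  set S := nbr θ r with hS
  set b : Fin p → ℝ := fun t => Real.tanh (θ r t) ^ 2 / (1 - Real.tanh (θ r t) ^ 2) with hb
  have hpos : ∀ t, 0 < 1 - Real.tanh (θ r t) ^ 2 := fun t => by
    linarith [tanh_sq_lt_one' (θ r t)]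
  have hbnn : ∀ t, 0 ≤ b t := fun t => div_nonneg (sq_nonneg _) (hpos t).le
  have hinv : ∀ t, 1 / (1 - Real.tanh (θ r t) ^ 2) = 1 + b t := fun t => by
    have hne := (hpos t).ne'
    rw [hb]; field_simp; ring
  set B := ∑ u ∈ S, b u with hB
  have hBnn : 0 ≤ B := Finset.sum_nonneg fun u _ => hbnn u
  have hDpos : (0:ℝ) < 1 + B := by linarith
  have hD : 1 - ((nbr θ r).card : ℝ) + ∑ u ∈ nbr θ r, 1 / (1 - Real.tanh (θ r u) ^ 2)
      = 1 + B := by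
    rw [← hS, Finset.sum_congr rfl (fun u _ => hinv u), Finset.sum_add_distrib, hB]
    simp; ring
  have hsub : S ⊆ univ.erase r := by
    intro t ht
    rw [hS, nbr, Finset.mem_filter] at ht
    exact Finset.mem_erase.2 ⟨ht.2.1, Finset.mem_univ t⟩
  have h0 : ∀ t ∈ univ.erase r, t ∉ S → |rescaled θ r t| = 0 := by
    intro t _ ht
    rw [rescaled, if_neg (by rwa [← hS]), abs_zero]
  have habs : ∀ t ∈ S, |rescaled θ r t| = Real.sqrt (b t * (1 + b t)) / (1 + B) := by
    intro t ht
    rw [rescaled, if_pos (by rwa [hS] at ht), hD]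
    have h2 : (Real.tanh (θ r t) / (1 - Real.tanh (θ r t) ^ 2)) ^ 2 = b t * (1 + b t) := by
      have hne := (hpos t).ne'
      rw [hb]; field_simp; ring_nf
    rw [abs_mul, abs_of_pos (by positivity : (0:ℝ) < 1 / (1 + B)),
      ← Real.sqrt_sq_eq_abs, h2]
    ring
  have hsum : ∑ t ∈ univ.erase r, |rescaled θ r t|
      = (∑ t ∈ S, Real.sqrt (b t * (1 + b t))) / (1 + B) := by
    rw [← Finset.sum_subset hsub h0, Finset.sum_congr rfl habs, ← Finset.sum_div]
  have main : ∀ C : ℝ, 0 ≤ C → ((S.card : ℝ)) ^ 2 ≤ 4 * ((S.card : ℝ) - 1) * C ^ 2 →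
      ∑ t ∈ univ.erase r, |rescaled θ r t| ≤ C := by
    intro C hC hC2
    rw [hsum, div_le_iff₀ hDpos]
    exact key_lemma S b (fun t _ => hbnn t) C hC (by omega) hC2
  have hd3 : (3:ℝ) ≤ (S.card : ℝ) := by exact_mod_cast hdr
  constructor
  · intro h5
    have hd5 : ((S.card : ℝ)) ≤ 5 := by exact_mod_cast h5
    refine main (5/4) (by norm_num) ?_
    nlinarith [mul_nonneg (by linarith : (0:ℝ) ≤ (S.card:ℝ) - 3)
      (by linarith : (0:ℝ) ≤ 5 - (S.card:ℝ))]
  · intro h5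
    have hd6 : (6:ℝ) ≤ ((S.card : ℝ)) := by exact_mod_cast h5
    refine main ((S.card : ℝ)/4) (by linarith) ?_
    nlinarith [sq_nonneg ((S.card:ℝ))]


end
end

section
/- Fix a node r and samples x^{(1)},…,x^{(n)} ∈ {−1,+1}^p, let θ̃*_{∖r} be the rescaled parameter vector and Wⁿ = −∇ℓ(θ̃*_{∖r}). Suppose Qⁿ_{SS} is invertible, ⦀Qⁿ_{S^cS}(Qⁿ_{SS})^{-1}⦀_∞ ≤ 1−α for some α ∈ (0,1], and ‖Wⁿ‖_∞ ≤ (α/(2(2−α)))·λ_n. Let θ̂_S be a minimizer of the restricted Lasso problem over vectors supported on S, let ẑ_S ∈ ∂‖θ̂_S‖₁ be the associated subgradient satisfying the stationarity condition of the restricted problem, set θ̂_{S^c} = 0, and define ẑ_{S^c} ∈ ℝ^{|S^c|} by λ_n·ẑ_{S^c} = W^n_{S^c} − Qⁿ_{S^cS}(Qⁿ_{SS})^{-1}W^n_S + λ_n·Qⁿ_{S^cS}(Qⁿ_{SS})^{-1}ẑ_S. Then ‖ẑ_{S^c}‖_∞ ≤ 1 − α/2 < 1 (strict dual feasibility). 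-/
open Finset Matrix

noncomputable section

/-- strict dual feasibility of the primal-dual witness construction. -/
theorem statement_11 (p n : ℕ) (θ : Matrix (Fin p) (Fin p) ℝ)
    (xs : Fin n → Config p) (r : Fin p) (lam α : ℝ) (hlam : 0 < lam)
    (hα0 : 0 < α) (hα1 : α ≤ 1)
    -- `Qⁿ_SS` is invertible, with inverse `K`
    (K : Matrix ↥(nbr θ r) ↥(nbr θ r) ℝ)
    (hK1 : subm (sampleCov xs) (nbr θ r) (nbr θ r) * K = 1)
    (hK2 : K * subm (sampleCov xs) (nbr θ r) (nbr θ r) = 1)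
    -- sample incoherence condition
    (hinc : matInfNorm (subm (sampleCov xs) (nbrC θ r) (nbr θ r) * K) ≤ 1 - α)
    -- bound on `‖Wⁿ‖_∞`
    (hW : ∀ s : Fin p, s ≠ r → |Wn θ xs r s| ≤ α / (2 * (2 - α)) * lam)
    -- `θ̂_S` solves the restricted Lasso problem, with associated subgradient `zS`
    (v : Fin p → ℝ) (hv : IsRestrictedLassoSol xs r (nbr θ r) lam v)
    (zS : Fin p → ℝ)
    (hstat : ∀ s ∈ nbr θ r, gradLoss xs r v s + lam * zS s = 0)
    (hsub : ∀ s ∈ nbr θ r, (v s ≠ 0 → zS s = Real.sign (v s)) ∧ |zS s| ≤ 1)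
    -- `ẑ_{S^c}` is defined by the stationarity identity
    (zC : Fin p → ℝ)
    (hzC : ∀ u : ↥(nbrC θ r), lam * zC u.1 =
      Wn θ xs r u.1 -
        (∑ s : ↥(nbr θ r),
          (subm (sampleCov xs) (nbrC θ r) (nbr θ r) * K) u s * Wn θ xs r s.1) +
        lam * ∑ s : ↥(nbr θ r),
          (subm (sampleCov xs) (nbrC θ r) (nbr θ r) * K) u s * zS s.1) :
    (∀ u ∈ nbrC θ r, |zC u| ≤ 1 - α / 2) ∧ 1 - α / 2 < 1 := by
  set M := subm (sampleCov xs) (nbrC θ r) (nbr θ r) * K with hM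
  set ε := α / (2 * (2 - α)) * lam with hε
  have h2α : (0:ℝ) < 2 - α := by linarith
  have hεpos : 0 ≤ ε := by
    apply mul_nonneg _ hlam.le
    positivity
  refine ⟨?_, by linarith⟩
  intro u hu
  have hune : u ≠ r := by
    have := Finset.mem_sdiff.mp hu
    exact Finset.ne_of_mem_erase this.1
  -- row sum bound
  have hrow : ∑ s : ↥(nbr θ r), |M ⟨u, hu⟩ s| ≤ 1 - α := by
    refine le_trans ?_ hinc
    exact le_ciSup (f := fun j : ↥(nbrC θ r) => ∑ k : ↥(nbr θ r), |M j k|)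
      (Set.Finite.bddAbove (Set.finite_range _)) ⟨u, hu⟩
  have hzCu := hzC ⟨u, hu⟩
  have hb1 : |Wn θ xs r u| ≤ ε := hW u hune
  have hb2 : |∑ s : ↥(nbr θ r), M ⟨u, hu⟩ s * Wn θ xs r s.1| ≤ (1 - α) * ε := by
    calc |∑ s : ↥(nbr θ r), M ⟨u, hu⟩ s * Wn θ xs r s.1|
        ≤ ∑ s : ↥(nbr θ r), |M ⟨u, hu⟩ s * Wn θ xs r s.1| := Finset.abs_sum_le_sum_abs _ _
      _ ≤ ∑ s : ↥(nbr θ r), |M ⟨u, hu⟩ s| * ε := by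
          refine Finset.sum_le_sum fun s _ => ?_
          rw [abs_mul]
          have hs : (s : Fin p) ≠ r := (Finset.mem_filter.mp s.2).2.1
          exact mul_le_mul_of_nonneg_left (hW s hs) (abs_nonneg _)
      _ = (∑ s : ↥(nbr θ r), |M ⟨u, hu⟩ s|) * ε := by rw [Finset.sum_mul]
      _ ≤ (1 - α) * ε := mul_le_mul_of_nonneg_right hrow hεpos
  have hb3 : |∑ s : ↥(nbr θ r), M ⟨u, hu⟩ s * zS s.1| ≤ 1 - α := by
    calc |∑ s : ↥(nbr θ r), M ⟨u, hu⟩ s * zS s.1|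
        ≤ ∑ s : ↥(nbr θ r), |M ⟨u, hu⟩ s * zS s.1| := Finset.abs_sum_le_sum_abs _ _
      _ ≤ ∑ s : ↥(nbr θ r), |M ⟨u, hu⟩ s| := by
          refine Finset.sum_le_sum fun s _ => ?_
          rw [abs_mul]
          have := (hsub s s.2).2
          nlinarith [abs_nonneg (M ⟨u, hu⟩ s)]
      _ ≤ 1 - α := hrow
  have key : lam * |zC u| ≤ ε + (1 - α) * ε + lam * (1 - α) := by
    have : lam * |zC u| = |lam * zC u| := by
      rw [abs_mul, abs_of_pos hlam]
    rw [this, hzCu]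
    calc |Wn θ xs r u - (∑ s : ↥(nbr θ r), M ⟨u, hu⟩ s * Wn θ xs r s.1) +
          lam * ∑ s : ↥(nbr θ r), M ⟨u, hu⟩ s * zS s.1|
        ≤ |Wn θ xs r u - ∑ s : ↥(nbr θ r), M ⟨u, hu⟩ s * Wn θ xs r s.1| +
          |lam * ∑ s : ↥(nbr θ r), M ⟨u, hu⟩ s * zS s.1| := abs_add_le _ _
      _ ≤ (|Wn θ xs r u| + |∑ s : ↥(nbr θ r), M ⟨u, hu⟩ s * Wn θ xs r s.1|) +
          lam * |∑ s : ↥(nbr θ r), M ⟨u, hu⟩ s * zS s.1| := by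
          rw [abs_mul, abs_of_pos hlam]
          exact add_le_add_left (abs_sub _ _) _
      _ ≤ ε + (1 - α) * ε + lam * (1 - α) := by
          have := mul_le_mul_of_nonneg_left hb3 hlam.le
          linarith
  have hεval : ε * (2 * (2 - α)) = α * lam := by
    field_simp [hε]
    rw [hε]
    field_simp
  have : lam * |zC u| ≤ lam * (1 - α / 2) := by nlinarith
  exact le_of_mul_le_mul_left this hlam

end
end

section
/- Fix a node r, samples x^{(1)},…,x^{(n)} ∈ {−1,+1}^p, a regularization parameter λ_n > 0, and a subset S ⊆ V∖{r}. Consider the Lasso problem min_{θ_{∖r}∈ℝ^{p−1}} { ℓ(θ_{∖r}) + λ_n‖θ_{∖r}‖₁ } with the square loss ℓ. Suppose there exists an optimal primal solution θ̂_{∖r} with associated optimal subgradient vector ẑ (satisfying the zero-subgradient condition ∇ℓ(θ̂_{∖r}) + λ_n·ẑ = 0 with ẑ_t = sign(θ̂_{rt}) whenever θ̂_{rt} ≠ 0 and |ẑ_t| ≤ 1 otherwise) such that ‖ẑ_{S^c}‖_∞ < 1. Then any optimal primal solution θ̃ of the Lasso problem satisfies θ̃_{S^c} = 0. Moreover, if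 the Hessian submatrix [∇²ℓ(θ̂_{∖r})]_{SS} = Qⁿ_{SS} is strictly positive definite, then θ̂_{∖r} is the unique optimal solution. -/
open Finset Matrix

noncomputable section

private lemma sign_mul_self' (x : ℝ) : Real.sign x * x = |x| := by
  rcases lt_trichotomy x 0 with h | h | h
  · rw [Real.sign_of_neg h, abs_of_neg h]; ring
  · simp [h]
  · rw [Real.sign_of_pos h, abs_of_pos h]; ring

private lemma sqLoss_expand' {p n : ℕ} (xs : Fin n → Config p) (r : Fin p)
    (v w : Fin p → ℝ) :
    sqLoss xs r w = sqLoss xs r v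
      + (∑ s ∈ univ.erase r, gradLoss xs r v s * (w s - v s))
      + (1 / (2 * (n : ℝ))) *
        ∑ i : Fin n, (∑ t ∈ univ.erase r, (w t - v t) * spin (xs i) t) ^ 2 := by
  have hgrad : ∑ s ∈ univ.erase r, gradLoss xs r v s * (w s - v s)
      = -((1 / (n : ℝ)) * ∑ i : Fin n,
          (spin (xs i) r - ∑ t ∈ univ.erase r, v t * spin (xs i) t) *
            (∑ t ∈ univ.erase r, (w t - v t) * spin (xs i) t)) := by
    have h1 : ∀ s ∈ univ.erase r, gradLoss xs r v s * (w s - v s)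
        = ∑ i : Fin n, -((1 / (n : ℝ)) *
            ((spin (xs i) r - ∑ t ∈ univ.erase r, v t * spin (xs i) t) *
              ((w s - v s) * spin (xs i) s))) := by
      intro s _
      unfold gradLoss
      rw [neg_mul, Finset.mul_sum, Finset.sum_mul, ← Finset.sum_neg_distrib]
      exact Finset.sum_congr rfl fun i _ => by ring
    rw [Finset.sum_congr rfl h1, Finset.sum_comm, Finset.mul_sum, ← Finset.sum_neg_distrib]
    refine Finset.sum_congr rfl fun i _ => ?_
    rw [Finset.mul_sum, Finset.mul_sum, ← Finset.sum_neg_distrib]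
  have hkey : ∀ i ∈ (univ : Finset (Fin n)),
      (spin (xs i) r - ∑ t ∈ univ.erase r, w t * spin (xs i) t) ^ 2
        = (spin (xs i) r - ∑ t ∈ univ.erase r, v t * spin (xs i) t) ^ 2
          - 2 * ((spin (xs i) r - ∑ t ∈ univ.erase r, v t * spin (xs i) t) *
              (∑ t ∈ univ.erase r, (w t - v t) * spin (xs i) t))
          + (∑ t ∈ univ.erase r, (w t - v t) * spin (xs i) t) ^ 2 := by
    intro i _
    have hsum : ∑ t ∈ univ.erase r, w t * spin (xs i) t
        = ∑ t ∈ univ.erase r, v t * spin (xs i) t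
          + ∑ t ∈ univ.erase r, (w t - v t) * spin (xs i) t := by
      rw [← Finset.sum_add_distrib]
      exact Finset.sum_congr rfl fun t _ => by ring
    rw [hsum]; ring
  unfold sqLoss
  rw [Finset.sum_congr rfl hkey, hgrad,
    Finset.sum_add_distrib, Finset.sum_sub_distrib, mul_add, mul_sub, ← Finset.mul_sum]
  have h2 : (1 : ℝ) / (2 * (n : ℝ)) = (1 / 2) * (1 / (n : ℝ)) := by
    rw [one_div, one_div, one_div, mul_inv]
  rw [h2]; ring

private lemma quad_helper' {N : ℕ} {α : Type*} [Fintype α] (c : ℝ) (g : Fin N → α → ℝ)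
    (u : α → ℝ) :
    ∑ a : α, u a * ∑ b : α, (c * ∑ i : Fin N, g i a * g i b) * u b
      = c * ∑ i : Fin N, (∑ a : α, u a * g i a) ^ 2 := by
  have h1 : ∀ i, (∑ a : α, u a * g i a) ^ 2
      = ∑ a : α, ∑ b : α, (u a * g i a) * (u b * g i b) := by
    intro i; rw [sq, Finset.sum_mul_sum]
  have h2 : ∀ a : α, u a * ∑ b : α, (c * ∑ i : Fin N, g i a * g i b) * u b
      = ∑ b : α, ∑ i : Fin N, c * ((u a * g i a) * (u b * g i b)) := by
    intro a
    rw [Finset.mul_sum]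
    refine Finset.sum_congr rfl fun b _ => ?_
    rw [Finset.mul_sum, Finset.sum_mul, Finset.mul_sum]
    exact Finset.sum_congr rfl fun i _ => by ring
  rw [Finset.sum_congr rfl fun a _ => h2 a]
  simp only [h1, Finset.mul_sum]
  rw [Finset.sum_congr rfl fun a (_ : a ∈ univ) => Finset.sum_comm]
  rw [Finset.sum_comm]

/-- shared sparsity and uniqueness of Lasso solutions
(Lemma 1 of Ravikumar et al., square-loss version). -/
theorem statement_12 (p n : ℕ) (xs : Fin n → Config p) (r : Fin p)
    (lam : ℝ) (hlam : 0 < lam) (S : Finset (Fin p)) (hS : S ⊆ univ.erase r)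
    (v : Fin p → ℝ) (hv : IsLassoSol xs r lam v)
    (z : Fin p → ℝ)
    (hstat : ∀ s : Fin p, s ≠ r → gradLoss xs r v s + lam * z s = 0)
    (hsub : ∀ s : Fin p, s ≠ r → (v s ≠ 0 → z s = Real.sign (v s)) ∧ |z s| ≤ 1)
    (hdual : ∀ u ∈ univ.erase r \ S, |z u| < 1) :
    (∀ w : Fin p → ℝ, IsLassoSol xs r lam w → ∀ u ∈ univ.erase r \ S, w u = 0) ∧
    ((subm (sampleCov xs) S S).PosDef →
      ∀ w : Fin p → ℝ, IsLassoSol xs r lam w → w = v) := by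
  classical
  -- the gradient equals -lam * z on the relevant coordinates
  have hgrad_z : ∀ s ∈ (univ : Finset (Fin p)).erase r,
      gradLoss xs r v s = -(lam * z s) := by
    intro s hs
    have := hstat s (Finset.ne_of_mem_erase hs)
    linarith
  have hzv : ∀ s ∈ (univ : Finset (Fin p)).erase r, z s * v s = |v s| := by
    intro s hs
    by_cases h : v s = 0
    · simp [h]
    · rw [(hsub s (Finset.ne_of_mem_erase hs)).1 h, sign_mul_self']
  -- the fundamental gap identity
  have hgap : ∀ w : Fin p → ℝ, lassoObj xs r lam w = lassoObj xs r lam v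
      + (1 / (2 * (n : ℝ))) *
          ∑ i : Fin n, (∑ t ∈ univ.erase r, (w t - v t) * spin (xs i) t) ^ 2
      + lam * ∑ s ∈ univ.erase r, (|w s| - z s * w s) := by
    intro w
    have h1 : ∑ s ∈ univ.erase r, gradLoss xs r v s * (w s - v s)
        = ∑ s ∈ univ.erase r, (-(lam * z s)) * (w s - v s) :=
      Finset.sum_congr rfl fun s hs => by rw [hgrad_z s hs]
    have h2 : ∑ s ∈ univ.erase r, |v s| = ∑ s ∈ univ.erase r, z s * v s :=
      Finset.sum_congr rfl fun s hs => (hzv s hs).symm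
    have hsum1 : ∑ s ∈ univ.erase r, (-(lam * z s)) * (w s - v s)
          + lam * ∑ s ∈ univ.erase r, |w s|
        = lam * ∑ s ∈ univ.erase r, (z s * v s)
          + lam * ∑ s ∈ univ.erase r, (|w s| - z s * w s) := by
      rw [Finset.mul_sum, Finset.mul_sum, Finset.mul_sum,
        ← Finset.sum_add_distrib, ← Finset.sum_add_distrib]
      exact Finset.sum_congr rfl fun s _ => by ring
    unfold lassoObj
    rw [sqLoss_expand' xs r v w, h1, h2]
    linarith [hsum1]
  -- every solution has zero gap terms
  have main : ∀ w : Fin p → ℝ, IsLassoSol xs r lam w →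
      ((1 / (2 * (n : ℝ))) *
          ∑ i : Fin n, (∑ t ∈ univ.erase r, (w t - v t) * spin (xs i) t) ^ 2 = 0) ∧
        ∀ s ∈ univ.erase r, |w s| - z s * w s = 0 := by
    intro w hw
    have heq : lassoObj xs r lam w = lassoObj xs r lam v :=
      le_antisymm (hw.2 v hv.1) (hv.2 w hw.1)
    have hQ : 0 ≤ (1 / (2 * (n : ℝ))) *
        ∑ i : Fin n, (∑ t ∈ univ.erase r, (w t - v t) * spin (xs i) t) ^ 2 := by
      positivity
    have hT : ∀ s ∈ univ.erase r, 0 ≤ |w s| - z s * w s := by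
      intro s hs
      have h1 : z s * w s ≤ |z s * w s| := le_abs_self _
      have h2 : |z s * w s| = |z s| * |w s| := abs_mul _ _
      have h3 : |z s| * |w s| ≤ 1 * |w s| :=
        mul_le_mul_of_nonneg_right (hsub s (Finset.ne_of_mem_erase hs)).2 (abs_nonneg _)
      nlinarith
    have hTsum : 0 ≤ ∑ s ∈ univ.erase r, (|w s| - z s * w s) :=
      Finset.sum_nonneg hT
    have hzero : (1 / (2 * (n : ℝ))) *
          ∑ i : Fin n, (∑ t ∈ univ.erase r, (w t - v t) * spin (xs i) t) ^ 2
        + lam * ∑ s ∈ univ.erase r, (|w s| - z s * w s) = 0 := by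
      have := hgap w
      linarith
    have hS0 : ∑ s ∈ univ.erase r, (|w s| - z s * w s) = 0 := by
      nlinarith
    refine ⟨by nlinarith, ?_⟩
    intro s hs
    exact (Finset.sum_eq_zero_iff_of_nonneg hT).1 hS0 s hs
  -- Part 1: shared sparsity
  have part1 : ∀ w : Fin p → ℝ, IsLassoSol xs r lam w →
      ∀ u ∈ univ.erase r \ S, w u = 0 := by
    intro w hw u hu
    obtain ⟨huE, _⟩ := Finset.mem_sdiff.1 hu
    have h0 : |w u| - z u * w u = 0 := (main w hw).2 u huE
    by_contra h
    have hpos : 0 < |w u| := abs_pos.mpr h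
    have h1 : z u * w u ≤ |z u| * |w u| := (le_abs_self _).trans (le_of_eq (abs_mul _ _))
    have h2 : |z u| * |w u| < 1 * |w u| := mul_lt_mul_of_pos_right (hdual u hu) hpos
    linarith
  refine ⟨part1, ?_⟩
  -- Part 2: uniqueness
  intro hpd w hw
  have hvS : ∀ u ∈ univ.erase r \ S, v u = 0 := part1 v hv
  have hwS : ∀ u ∈ univ.erase r \ S, w u = 0 := part1 w hw
  have hboth : ∀ t : Fin p, t ∉ S → w t = v t := by
    intro t ht
    by_cases htr : t = r
    · rw [htr, hw.1, hv.1]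
    · have htE : t ∈ univ.erase r \ S :=
        Finset.mem_sdiff.2 ⟨Finset.mem_erase.2 ⟨htr, Finset.mem_univ t⟩, ht⟩
      rw [hwS t htE, hvS t htE]
  have hD : ∀ i : Fin n, ∑ t ∈ univ.erase r, (w t - v t) * spin (xs i) t
      = ∑ t ∈ S, (w t - v t) * spin (xs i) t := by
    intro i
    refine (Finset.sum_subset hS fun t _ htS => ?_).symm
    rw [hboth t htS]; ring
  set uvec : ↥S → ℝ := fun a => w a.1 - v a.1 with huvec
  have hval : dotProduct uvec ((subm (sampleCov xs) S S) *ᵥ uvec)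
      = (1 / (n : ℝ)) * ∑ i : Fin n, (∑ t ∈ S, (w t - v t) * spin (xs i) t) ^ 2 := by
    have := quad_helper' (N := n) (α := ↥S)
      (1 / (n : ℝ)) (fun i a => spin (xs i) a.1) uvec
    simp only [dotProduct, Matrix.mulVec, subm, sampleCov, Matrix.of_apply] at this ⊢
    rw [this]
    refine congrArg _ (Finset.sum_congr rfl fun i _ => ?_)
    rw [show (∑ t ∈ S, (w t - v t) * spin (xs i) t)
        = ∑ a : ↥S, (w a.1 - v a.1) * spin (xs i) a.1 from
      (Finset.sum_coe_sort S fun t => (w t - v t) * spin (xs i) t).symm]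
  have hval0 : dotProduct uvec ((subm (sampleCov xs) S S) *ᵥ uvec) = 0 := by
    rw [hval]
    rcases Nat.eq_zero_or_pos n with hn | hn
    · subst hn; norm_num
    · have hn' : (0 : ℝ) < n := by exact_mod_cast hn
      have hQ0 := (main w hw).1
      have hsum0 : ∑ i : Fin n, (∑ t ∈ univ.erase r, (w t - v t) * spin (xs i) t) ^ 2 = 0 := by
        have hc : (0 : ℝ) < 1 / (2 * (n : ℝ)) := by positivity
        by_contra hne
        have hge : 0 ≤ ∑ i : Fin n,
            (∑ t ∈ univ.erase r, (w t - v t) * spin (xs i) t) ^ 2 :=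
          Finset.sum_nonneg fun i _ => sq_nonneg _
        have : 0 < ∑ i : Fin n,
            (∑ t ∈ univ.erase r, (w t - v t) * spin (xs i) t) ^ 2 :=
          lt_of_le_of_ne hge (Ne.symm hne)
        nlinarith
      have : ∑ i : Fin n, (∑ t ∈ S, (w t - v t) * spin (xs i) t) ^ 2 = 0 := by
        rw [show (∑ i : Fin n, (∑ t ∈ S, (w t - v t) * spin (xs i) t) ^ 2)
            = ∑ i : Fin n, (∑ t ∈ univ.erase r, (w t - v t) * spin (xs i) t) ^ 2 from
          Finset.sum_congr rfl fun i _ => by rw [hD i]]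
        exact hsum0
      rw [this, mul_zero]
  have huv0 : uvec = 0 := by
    by_contra h
    have := hpd.dotProduct_mulVec_pos (x := uvec) h
    rw [show star uvec = uvec from rfl] at this
    rw [hval0] at this
    exact lt_irrefl 0 this
  funext t
  by_cases ht : t ∈ S
  · have := congrFun huv0 ⟨t, ht⟩
    simp only [huvec, Pi.zero_apply] at this
    linarith
  · rw [hboth t ht]


end
end

section
/- Let d ≥ 2 and 0 < t < 1. Let Q be the d×d matrix with Q_{ii} = 1 and Q_{ij} = t² for i ≠ j, and let v ∈ ℝ^d be the vector with one coordinate equal to t and the remaining d−1 coordinates equal to t³. Then ‖Q^{-1}v‖₁ = t. Consequently, a row of the Ising covariance matrix of a node at graph distance 1 from exactly one neighbor of r and distance 3 from the other d−1 neighbors (with correlations t^{distance}) yields value t < 1 under the incoherence functional ⦀·⦀_∞. -/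
open Matrix

/-- for the d×d matrix Q with unit diagonal and off-diagonal entries t²,
and the vector v with one coordinate t and the remaining coordinates t³, the ℓ1 norm of
Q⁻¹ v equals t. -/
theorem statement_19 (d : ℕ) (hd : 2 ≤ d) (t : ℝ) (ht0 : 0 < t) (ht1 : t < 1)
    (Q : Matrix (Fin d) (Fin d) ℝ)
    (hQ : Q = Matrix.of fun i j => if i = j then (1 : ℝ) else t ^ 2) :
    ∀ i₀ : Fin d,
      ∑ i : Fin d, |(Q⁻¹ *ᵥ fun i => if i = i₀ then t else t ^ 3) i| = t := by
  intro i₀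
  have ht2 : t ^ 2 < 1 := by nlinarith
  -- quadratic form identity
  have key : ∀ x : Fin d → ℝ,
      x ⬝ᵥ (Q *ᵥ x) = t ^ 2 * (∑ i, x i) ^ 2 + (1 - t ^ 2) * ∑ i, (x i) ^ 2 := by
    intro x
    have hinner : ∀ i, (Q *ᵥ x) i = t ^ 2 * (∑ j, x j) + (1 - t ^ 2) * x i := by
      intro i
      simp only [hQ, mulVec, dotProduct, Matrix.of_apply]
      have : ∀ j, (if i = j then (1:ℝ) else t ^ 2) * x j
          = t ^ 2 * x j + (if i = j then (1 - t ^ 2) * x j else 0) := by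
        intro j; by_cases h : i = j <;> simp [h] <;> ring
      rw [Finset.sum_congr rfl fun j _ => this j, Finset.sum_add_distrib]
      simp [Finset.sum_ite_eq, ← Finset.mul_sum]
    simp only [dotProduct, hinner]
    rw [Finset.sum_congr rfl (fun i _ => (by ring :
        x i * (t ^ 2 * (∑ j, x j) + (1 - t ^ 2) * x i)
          = t ^ 2 * (∑ j, x j) * x i + (1 - t ^ 2) * (x i) ^ 2)),
      Finset.sum_add_distrib, ← Finset.mul_sum, ← Finset.mul_sum]
    ring
  have hpos : Q.PosDef := by
    rw [Matrix.posDef_iff_dotProduct_mulVec]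
    constructor
    · ext i j
      simp only [hQ, Matrix.conjTranspose_apply, Matrix.of_apply, star_trivial]
      by_cases h : i = j <;> simp [h, eq_comm]
    · intro x hx
      have hsq : 0 < ∑ i, (x i) ^ 2 := by
        obtain ⟨i, hi⟩ := Function.ne_iff.mp hx
        have h1 : (x i) ^ 2 ≤ ∑ j, (x j) ^ 2 :=
          Finset.single_le_sum (fun j _ => sq_nonneg (x j)) (Finset.mem_univ i)
        have hi' : x i ≠ 0 := by simpa using hi
        have : 0 < (x i) ^ 2 := by rcases hi'.lt_or_gt with h | h <;> nlinarith
        linarith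
      have := key x
      simp only [star_trivial]
      rw [this]
      have h1 : 0 ≤ t ^ 2 * (∑ i, x i) ^ 2 := by positivity
      nlinarith
  have hdet : IsUnit Q.det := isUnit_iff_ne_zero.mpr (ne_of_gt hpos.det_pos)
  set w : Fin d → ℝ := fun i => if i = i₀ then t else 0 with hw
  have hQw : Q *ᵥ w = fun i => if i = i₀ then t else t ^ 3 := by
    funext i
    simp only [hQ, hw, mulVec, dotProduct, Matrix.of_apply, mul_ite, mul_zero]
    rw [Finset.sum_ite_eq']
    by_cases h : i = i₀ <;> simp [h] <;> ring
  have hsol : (Q⁻¹ *ᵥ fun i => if i = i₀ then t else t ^ 3) = w := by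
    rw [← hQw, mulVec_mulVec, Matrix.nonsing_inv_mul Q hdet, one_mulVec]
  rw [hsol]
  have : ∀ i, |w i| = if i = i₀ then t else 0 := by
    intro i; by_cases h : i = i₀ <;> simp [hw, h, abs_of_pos ht0]
  simp only [this]
  simp
end
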